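/- arXiv:2208.05664 — 8 statements merged into one kernel-verified Lean document; each statement's English description precedes it below -/
import Mathlib

section
/- Let q ≥ 2, m ≥ 1 and ℓ with 0 ≤ ℓ < (q-1)m. Let H = (q - ℓ_0) q^{m - ℓ_1 - 1} - 1, where (q-1)m - ℓ = (q-1)(m - ℓ_1 - 1) + (q - 1 - ℓ_0) with 0 ≤ ℓ_0 ≤ q-2 (i.e., ℓ = (q-1)ℓ_1 + ℓ_0). Then H is the smallest positive integer whose base-q digit sum equals (q-1)m - ℓ, and every integer u with 0 < u < H satisfies wt_q(u) < (q-1)m - ℓ. -/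
lemma wtA (q : ℕ) (hq : 2 ≤ q) : ∀ (k r : ℕ), 1 ≤ r → r ≤ q - 1 →
    (Nat.digits q ((r + 1) * q ^ k - 1)).sum = k * (q - 1) + r := by
  intro k
  induction k with
  | zero =>
    intro r hr1 hr
    simp only [pow_zero, mul_one, Nat.add_sub_cancel, zero_mul, zero_add]
    rw [Nat.digits_def' hq (by omega)]
    rw [Nat.mod_eq_of_lt (by omega), Nat.div_eq_of_lt (by omega)]
    simp
  | succ k ih =>
    intro r hr1 hr
    have hpow : 1 ≤ q ^ k := Nat.one_le_pow _ _ (by omega)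
    have h1 : 1 ≤ (r + 1) * q ^ k := le_trans hpow (Nat.le_mul_of_pos_left _ (by omega))
    have hqle : q ≤ (r + 1) * q ^ (k + 1) := by
      calc q = 1 * q ^ 1 := by ring
      _ ≤ (r + 1) * q ^ (k + 1) :=
        Nat.mul_le_mul (by omega) (Nat.pow_le_pow_right (by omega) (by omega))
    have hmul2 : q * ((r + 1) * q ^ k) = (r + 1) * q ^ (k + 1) := by ring
    have hmul : q * ((r + 1) * q ^ k - 1) = q * ((r + 1) * q ^ k) - q * 1 :=
      Nat.mul_sub q _ 1
    have hn : (r + 1) * q ^ (k + 1) - 1 = q * ((r + 1) * q ^ k - 1) + (q - 1) := by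
      omega
    rw [hn, Nat.digits_def' hq (by omega)]
    rw [Nat.mul_add_mod, Nat.mod_eq_of_lt (by omega), Nat.mul_add_div (by omega),
      Nat.div_eq_of_lt (by omega)]
    simp only [add_zero, List.sum_cons, ih r hr1 hr]
    rw [Nat.succ_mul]
    omega

lemma wtB (q : ℕ) (hq : 2 ≤ q) : ∀ (k r u : ℕ), 1 ≤ r → r ≤ q - 1 →
    u < (r + 1) * q ^ k - 1 → (Nat.digits q u).sum < k * (q - 1) + r := by
  intro k
  induction k with
  | zero =>
    intro r u hr1 hr hu
    simp only [pow_zero, mul_one, Nat.add_sub_cancel] at hu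
    rcases Nat.eq_zero_or_pos u with h | h
    · subst h; simp only [Nat.digits_zero, List.sum_nil]; omega
    · rw [Nat.digits_def' hq (by omega), Nat.mod_eq_of_lt (by omega),
        Nat.div_eq_of_lt (by omega)]
      simp only [Nat.digits_zero, List.sum_cons, List.sum_nil, add_zero, zero_mul, zero_add]
      omega
  | succ k ih =>
    intro r u hr1 hr hu
    rcases Nat.eq_zero_or_pos u with h | h
    · subst h; simp only [Nat.digits_zero, List.sum_nil]; omega
    have hpow : 1 ≤ q ^ k := Nat.one_le_pow _ _ (by omega)
    have h1 : 1 ≤ (r + 1) * q ^ k := le_trans hpow (Nat.le_mul_of_pos_left _ (by omega))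
    have hqle : q ≤ (r + 1) * q ^ (k + 1) := by
      calc q = 1 * q ^ 1 := by ring
      _ ≤ (r + 1) * q ^ (k + 1) :=
        Nat.mul_le_mul (by omega) (Nat.pow_le_pow_right (by omega) (by omega))
    have hmul2 : q * ((r + 1) * q ^ k) = (r + 1) * q ^ (k + 1) := by ring
    have hmul : q * ((r + 1) * q ^ k - 1) = q * ((r + 1) * q ^ k) - q * 1 :=
      Nat.mul_sub q _ 1
    rw [Nat.digits_def' hq (by omega)]
    simp only [List.sum_cons]
    have hdm := Nat.div_add_mod u q
    have hmod : u % q < q := Nat.mod_lt u (by omega)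
    rw [Nat.succ_mul]
    rcases lt_or_ge (u / q) ((r + 1) * q ^ k - 1) with hdiv | hdiv
    · have := ih r (u / q) hr1 hr hdiv
      omega
    · have hudiv : u / q ≤ (r + 1) * q ^ k - 1 := by
        have : u / q < (r + 1) * q ^ k := by
          rw [Nat.div_lt_iff_lt_mul (show 0 < q by omega)]
          calc u < (r + 1) * q ^ (k + 1) - 1 := hu
          _ ≤ (r + 1) * q ^ k * q := by
            have : (r + 1) * q ^ k * q = (r + 1) * q ^ (k + 1) := by ring
            omega
        omega
      have heq : u / q = (r + 1) * q ^ k - 1 := le_antisymm hudiv hdiv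
      have humod : u % q ≤ q - 2 := by
        -- u = q * (u/q) + u%q < (r+1)q^(k+1) - 1 = q*((r+1)q^k - 1) + (q-1)
        have h2 : q * ((r + 1) * q ^ k - 1) + (q - 1) = (r + 1) * q ^ (k + 1) - 1 := by
          omega
        rw [heq] at hdm
        omega
      rw [heq, wtA q hq k r hr1 hr]
      omega

theorem stmt_4 (q m ℓ ℓ₀ ℓ₁ : ℕ) (hq : 2 ≤ q) (hm : 1 ≤ m)
    (hℓ : ℓ = (q - 1) * ℓ₁ + ℓ₀) (hℓ₀ : ℓ₀ ≤ q - 2) (hℓ₁ : ℓ₁ ≤ m - 1)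
    (hℓm : ℓ < (q - 1) * m) :
    0 < (q - ℓ₀) * q ^ (m - ℓ₁ - 1) - 1 ∧
    (Nat.digits q ((q - ℓ₀) * q ^ (m - ℓ₁ - 1) - 1)).sum = (q - 1) * m - ℓ ∧
    ∀ u, 0 < u → u < (q - ℓ₀) * q ^ (m - ℓ₁ - 1) - 1 →
      (Nat.digits q u).sum < (q - 1) * m - ℓ := by
  subst hℓ
  obtain ⟨k, rfl⟩ : ∃ k, m = k + ℓ₁ + 1 := ⟨m - ℓ₁ - 1, by omega⟩
  obtain ⟨r, rfl⟩ : ∃ r, q = r + ℓ₀ + 2 := ⟨q - ℓ₀ - 2, by omega⟩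
  have e1 : r + ℓ₀ + 2 - ℓ₀ = r + 2 := by omega
  have e2 : k + ℓ₁ + 1 - ℓ₁ - 1 = k := by omega
  have e3 : r + ℓ₀ + 2 - 1 = r + ℓ₀ + 1 := by omega
  rw [e1, e2, e3]
  have hq2 : 2 ≤ r + ℓ₀ + 2 := by omega
  have hpow : 1 ≤ (r + ℓ₀ + 2) ^ k := Nat.one_le_pow _ _ (by omega)
  have hr1 : 1 ≤ r + 1 := by omega
  have hr : r + 1 ≤ r + ℓ₀ + 2 - 1 := by omega
  have hkey : (r + ℓ₀ + 1) * (k + ℓ₁ + 1) =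
      ((r + ℓ₀ + 1) * ℓ₁ + ℓ₀) + (k * (r + ℓ₀ + 1) + (r + 1)) := by ring
  have hS : (r + ℓ₀ + 1) * (k + ℓ₁ + 1) - ((r + ℓ₀ + 1) * ℓ₁ + ℓ₀)
      = k * (r + ℓ₀ + 1) + (r + 1) := by omega
  have hA := wtA (r + ℓ₀ + 2) hq2 k (r + 1) hr1 hr
  have hB := wtB (r + ℓ₀ + 2) hq2 k (r + 1)
  rw [e3] at hA
  have h2 : 2 ≤ (r + 2) * (r + ℓ₀ + 2) ^ k := by
    calc 2 = 2 * 1 := by norm_num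
    _ ≤ (r + 2) * (r + ℓ₀ + 2) ^ k := Nat.mul_le_mul (by omega) hpow
  refine ⟨by omega, ?_, ?_⟩
  · rw [hS]
    have : (r + 1 + 1) * (r + ℓ₀ + 2) ^ k = (r + 2) * (r + ℓ₀ + 2) ^ k := by ring
    rw [this] at hA
    exact hA
  · intro u _ hu
    rw [hS]
    have hB' := hB u hr1 hr (by
      have : (r + 1 + 1) * (r + ℓ₀ + 2) ^ k = (r + 2) * (r + ℓ₀ + 2) ^ k := by ring
      omega)
    rw [e3] at hB'
    exact hB'
end

section
/- Let q be a prime power and n a positive integer with gcd(q, n) = 1, and let r divide q-1. If the multiplicative order of q modulo n is ℓ, then the multiplicative order of q modulo rn equals (r / gcd((q^ℓ - 1)/n, r)) · ℓ. -/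
/-!
Reduction mod `n` shows `ℓ ∣ ord_{rn}(q)`, hence `ord_{rn}(q) = ℓ · ord_{rn}(q ^ ℓ)`. Write
`q ^ ℓ = 1 + x` with `x = q ^ ℓ - 1 = n m`. Since `r ∣ q - 1 ∣ x` and `n ∣ x`, we have `x ^ 2 ≡ 0`
mod `rn`, so `(1 + x) ^ t ≡ 1 + t x` and the multiplicative order of `q ^ ℓ` is the additive order
of `n m` in `ZMod (r n)`, which is `r / gcd(m, r)`.
-/

theorem one_add_pow_of_sq_eq_zero {R : Type*} [Semiring R] {x : R} (hx : x ^ 2 = 0) (t : ℕ) :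
    (1 + x) ^ t = 1 + t * x := by
  induction t with
  | zero => simp
  | succ t ih =>
    rw [pow_succ, ih]
    calc (1 + t * x) * (1 + x) = 1 + (t + 1) * x + t * x ^ 2 := by noncomm_ring
      _ = 1 + ((t + 1 : ℕ) : R) * x := by rw [hx]; push_cast; simp

theorem orderOf_one_add_eq_addOrderOf {R : Type*} [Ring R] {x : R} (hx : x ^ 2 = 0) :
    orderOf (1 + x) = addOrderOf x := by
  have key (t : ℕ) : (1 + x) ^ t = 1 ↔ t • x = 0 := by
    rw [one_add_pow_of_sq_eq_zero hx, nsmul_eq_mul, add_eq_left]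
  exact Nat.dvd_antisymm
    (orderOf_dvd_of_pow_eq_one ((key _).2 (addOrderOf_nsmul_eq_zero x)))
    (addOrderOf_dvd_of_nsmul_eq_zero ((key _).1 (pow_orderOf_eq_one _)))

theorem orderOf_eq_mul_orderOf_pow {G : Type*} [Monoid G] {x : G} {ℓ : ℕ} (hℓ : ℓ ≠ 0)
    (h : ℓ ∣ orderOf x) : orderOf x = ℓ * orderOf (x ^ ℓ) := by
  rw [orderOf_pow_of_dvd hℓ h, Nat.mul_div_cancel' h]

namespace ZMod

theorem orderOf_natCast_dvd_of_dvd (a : ℕ) {m n : ℕ} (h : m ∣ n) :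
    orderOf (a : ZMod m) ∣ orderOf (a : ZMod n) := by
  simpa using orderOf_map_dvd (castHom h (ZMod m) : ZMod n →* ZMod m) (a : ZMod n)

theorem natCast_pow_eq_one_iff_dvd {a n k : ℕ} (ha : a ≠ 0) :
    (a : ZMod n) ^ k = 1 ↔ n ∣ a ^ k - 1 := by
  have h1 : 1 ≤ a ^ k := Nat.one_le_pow _ _ (Nat.pos_of_ne_zero ha)
  rw [← natCast_eq_zero_iff, Nat.cast_sub h1, sub_eq_zero, Nat.cast_pow, Nat.cast_one]

theorem natCast_sq_eq_zero_of_dvd_of_dvd {a r n : ℕ} (hr : r ∣ a) (hn : n ∣ a) :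
    (a : ZMod (r * n)) ^ 2 = 0 := by
  rw [← Nat.cast_pow, natCast_eq_zero_iff, sq]
  exact Nat.mul_dvd_mul hr hn

theorem addOrderOf_natCast_mul_mul {r n : ℕ} (m : ℕ) (hr : r ≠ 0) (hn : n ≠ 0) :
    addOrderOf ((n * m : ℕ) : ZMod (r * n)) = r / Nat.gcd m r := by
  rw [addOrderOf_coe _ (mul_ne_zero hr hn), mul_comm r n, Nat.gcd_mul_left,
    Nat.mul_div_mul_left _ _ (Nat.pos_of_ne_zero hn), Nat.gcd_comm]

end ZMod

theorem stmt_5 (q r n ℓ : ℕ) (hq : IsPrimePow q) (hn : 0 < n) (hr : 0 < r)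
    (hco : Nat.Coprime q n) (hrq : r ∣ q - 1)
    (hℓ : ℓ = orderOf (q : ZMod n)) :
    orderOf (q : ZMod (r * n)) = (r / Nat.gcd ((q ^ ℓ - 1) / n) r) * ℓ := by
  have : NeZero n := ⟨hn.ne'⟩
  have hq0 : q ≠ 0 := hq.ne_zero
  have hℓ0 : ℓ ≠ 0 := by
    rw [hℓ, ← ZMod.coe_unitOfCoprime q hco, orderOf_units]
    exact (orderOf_pos _).ne'
  have hnm : n * ((q ^ ℓ - 1) / n) = q ^ ℓ - 1 :=
    Nat.mul_div_cancel' ((ZMod.natCast_pow_eq_one_iff_dvd hq0).1 (hℓ ▸ pow_orderOf_eq_one _))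
  have hr_dvd : r ∣ q ^ ℓ - 1 := hrq.trans (by simpa using Nat.sub_dvd_pow_sub_pow q 1 ℓ)
  have hqℓ : (q : ZMod (r * n)) ^ ℓ = 1 + ((n * ((q ^ ℓ - 1) / n) : ℕ) : ZMod (r * n)) := by
    rw [hnm, Nat.cast_sub (Nat.one_le_pow _ _ (Nat.pos_of_ne_zero hq0))]
    push_cast
    ring
  rw [orderOf_eq_mul_orderOf_pow hℓ0 (hℓ ▸ ZMod.orderOf_natCast_dvd_of_dvd q (dvd_mul_left n r)),
    hqℓ, orderOf_one_add_eq_addOrderOf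
      (ZMod.natCast_sq_eq_zero_of_dvd_of_dvd (by rwa [hnm]) (dvd_mul_right n _)),
    ZMod.addOrderOf_natCast_mul_mul _ hr.ne' hn.ne', mul_comm]
end

section
/- Let C be a cyclic code of length N = rn over GF(q) with generator polynomial g(x), where r ∣ q-1 and λ ∈ GF(q)* has order r. Define ğ(x) = gcd(g(x), x^n - λ) and let C̲ be the λ-constacyclic code of length n generated by ğ(x). Then C̲ = { c(x) mod (x^n - λ) : c(x) ∈ C }, i.e., the constacyclic code C̲ equals the set of reductions modulo x^n - λ of codewords of C. -/
open Polynomial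

theorem stmt_7 {F : Type*} [Field F] [Fintype F] [DecidableEq F] (r n N : ℕ) (lam : F)
    (hr : 1 < r) (hrq : r ∣ Fintype.card F - 1) (hn : 0 < n) (hN : N = r * n)
    (hlam : orderOf lam = r)
    (g : F[X]) (hg : g ∣ X ^ N - 1)
    (hnd1 : ¬ IsUnit (EuclideanDomain.gcd g (X ^ n - C lam)))
    (hnd2 : ¬ (X ^ n - C lam) ∣ g)
    (c' : F[X]) :
    EuclideanDomain.gcd g (X ^ n - C lam) ∣ c' ↔
      ∃ c : F[X], g ∣ c ∧ (X ^ n - C lam) ∣ (c - c') := by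
  constructor
  · rintro ⟨t, ht⟩
    refine ⟨g * (EuclideanDomain.gcdA g (X ^ n - C lam) * t), dvd_mul_right _ _, ?_⟩
    refine ⟨-(EuclideanDomain.gcdB g (X ^ n - C lam) * t), ?_⟩
    have := EuclideanDomain.gcd_eq_gcd_ab g (X ^ n - C lam)
    rw [ht, this]
    ring
  · rintro ⟨c, hc, ⟨k, hk⟩⟩
    have h1 : EuclideanDomain.gcd g (X ^ n - C lam) ∣ c :=
      dvd_trans (EuclideanDomain.gcd_dvd_left _ _) hc
    have h2 : EuclideanDomain.gcd g (X ^ n - C lam) ∣ c - c' :=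
      hk ▸ Dvd.dvd.mul_right (EuclideanDomain.gcd_dvd_right _ _) k
    have := dvd_sub h1 h2
    simpa using this
end

section
/- Let C be a cyclic code of length N = rn over GF(q) with generator polynomial g(x) = Π_{i ∈ Ind(C)} ğ_i(x), where ğ_i(x) = gcd(g(x), x^n - λ^i) and Ind(C) = {i : ğ_i ≠ 1}. If 1 ≤ |Ind(C)| ≤ r-1, then the minimum distance of C satisfies 2 ≤ d(C) ≤ |Ind(C)| + 1. -/
open Polynomial

lemma expand_support_card_le {F : Type*} [Field F] (n : ℕ) (hn : 0 < n) (P : F[X]) :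
    ((expand F n P : F[X])).support.card ≤ P.support.card := by
  have hsub : ((expand F n P : F[X])).support ⊆ P.support.image (· * n) := by
    intro k hk
    rw [Polynomial.mem_support_iff, Polynomial.coeff_expand hn] at hk
    by_cases hdvd : n ∣ k
    · rw [if_pos hdvd] at hk
      refine Finset.mem_image.2 ⟨k / n, Polynomial.mem_support_iff.2 hk, ?_⟩
      exact Nat.div_mul_cancel hdvd
    · simp [hdvd] at hk
  calc ((expand F n P : F[X])).support.card ≤ (P.support.image (· * n)).card :=
        Finset.card_le_card hsub
    _ ≤ P.support.card := Finset.card_image_le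

theorem stmt_8 {F : Type*} [Field F] [Fintype F] [DecidableEq F] (r n N : ℕ) (lam : F)
    (hr : 1 < r) (hrq : r ∣ Fintype.card F - 1) (hn : 0 < n) (hN : N = r * n)
    (hlam : orderOf lam = r) (g : F[X]) (hg : g ∣ X ^ N - 1)
    (Ind : Finset ℕ)
    (hInd : ∀ i : ℕ, i ∈ Ind ↔
      i < r ∧ ¬ IsUnit (EuclideanDomain.gcd g (X ^ n - C (lam ^ i))))
    (hfact : g = ∏ i ∈ Ind, EuclideanDomain.gcd g (X ^ n - C (lam ^ i)))
    (h1 : 1 ≤ Ind.card) (h2 : Ind.card ≤ r - 1) :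
    (∀ c : F[X], g ∣ c → c.degree < N → c ≠ 0 → 2 ≤ c.support.card) ∧
    (∃ c : F[X], g ∣ c ∧ c.degree < N ∧ c ≠ 0 ∧ c.support.card ≤ Ind.card + 1) := by
  have hNpos : 0 < N := by
    subst hN; exact Nat.mul_pos (lt_trans Nat.zero_lt_one hr) hn
  -- g is not a unit
  have hgnu : ¬ IsUnit g := by
    obtain ⟨i, hi⟩ := Finset.card_pos.mp (lt_of_lt_of_le Nat.zero_lt_one h1)
    intro hu
    exact ((hInd i).1 hi).2 (isUnit_of_dvd_unit (EuclideanDomain.gcd_dvd_left _ _) hu)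
  constructor
  · intro c hgc hdeg hc0
    by_contra hlt
    push_neg at hlt
    have hcard : c.support.card ≤ 1 := by omega
    obtain ⟨k, a, rfl⟩ := Polynomial.card_support_le_one_iff_monomial.mp hcard
    have ha : a ≠ 0 := by
      intro h; subst h; simp at hc0
    -- g divides a monomial
    rw [← Polynomial.C_mul_X_pow_eq_monomial] at hgc
    have hdvdX : g ∣ X ^ k := by
      have hu : IsUnit (C a) := isUnit_C.2 (isUnit_iff_ne_zero.2 ha)
      obtain ⟨u, hu'⟩ := hu
      obtain ⟨d, hd⟩ := hgc
      refine ⟨↑u⁻¹ * d, ?_⟩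
      have : (C a : F[X]) * X ^ k = g * d := hd
      calc (X ^ k : F[X]) = ↑u⁻¹ * (C a * X ^ k) := by rw [← hu']; rw [← mul_assoc]; simp
        _ = ↑u⁻¹ * (g * d) := by rw [this]
        _ = g * (↑u⁻¹ * d) := by ring
    -- X^k and X^N - 1 are coprime
    have hcop : IsCoprime (X ^ k : F[X]) (X ^ N - 1) := by
      have : IsCoprime (X : F[X]) (X ^ N - 1) := by
        refine ⟨X ^ (N - 1), -1, ?_⟩
        have h : (X : F[X]) ^ (N - 1) * X = X ^ N := by
          rw [← pow_succ]
          congr 1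
          omega
        rw [h]
        ring
      exact this.pow_left
    exact hgnu (hcop.isUnit_of_dvd' hdvdX hg)
  · -- the codeword
    set c : F[X] := ∏ i ∈ Ind, (X ^ n - C (lam ^ i)) with hc
    have hfacne : ∀ i ∈ Ind, (X ^ n - C (lam ^ i) : F[X]) ≠ 0 := by
      intro i _
      intro h
      have : ((X : F[X]) ^ n - C (lam ^ i)).natDegree = n := by
        rw [Polynomial.natDegree_sub_C, Polynomial.natDegree_X_pow]
      rw [h] at this
      simp at this
      omega
    have hdegfac : ∀ i ∈ Ind, (X ^ n - C (lam ^ i) : F[X]).natDegree = n := by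
      intro i _
      rw [Polynomial.natDegree_sub_C, Polynomial.natDegree_X_pow]
    have hc0 : c ≠ 0 := Finset.prod_ne_zero_iff.2 hfacne
    have hcdeg : c.natDegree = Ind.card * n := by
      rw [hc, Polynomial.natDegree_prod _ _ hfacne]
      rw [Finset.sum_congr rfl hdegfac]
      simp [Finset.sum_const, smul_eq_mul]
    refine ⟨c, ?_, ?_, hc0, ?_⟩
    · rw [hfact]
      exact Finset.prod_dvd_prod_of_dvd _ _ fun i _ =>
        EuclideanDomain.gcd_dvd_right _ _
    · rw [Polynomial.degree_eq_natDegree hc0, hcdeg]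
      have : Ind.card * n < N := by
        subst hN
        have : Ind.card < r := by omega
        exact Nat.mul_lt_mul_of_lt_of_le this le_rfl hn
      exact_mod_cast this
    · have hcomp : c = expand F n (∏ i ∈ Ind, (X - C (lam ^ i))) := by
        rw [map_prod]
        refine Finset.prod_congr rfl fun i _ => ?_
        rw [map_sub, Polynomial.expand_X, Polynomial.expand_C]
      set P : F[X] := ∏ i ∈ Ind, (X - C (lam ^ i)) with hP
      have hPdeg : P.natDegree = Ind.card := by
        rw [hP, Polynomial.natDegree_prod _ _ (fun i _ => Polynomial.X_sub_C_ne_zero _),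
          Finset.sum_congr rfl fun i _ => Polynomial.natDegree_X_sub_C (lam ^ i)]
        simp
      calc c.support.card = ((expand F n P : F[X])).support.card := by rw [hcomp]
        _ ≤ P.support.card := expand_support_card_le n hn P
        _ ≤ P.natDegree + 1 := Polynomial.card_supp_le_succ_natDegree P
        _ = Ind.card + 1 := by rw [hPdeg]
end

section
/- Let q be a prime power, m ≥ 2, r > 1 a divisor of q-1, N = q^m - 1, and 1 ≤ ℓ ≤ m-1. The number of integers i with 1 ≤ i ≤ N-1, Hamming weight wt(i) ≤ ℓ (number of nonzero base-q digits), and i ≡ 1 (mod r), equals (1/r) Σ_{t=1}^{ℓ} binom(m, t) (q-1)^t. -/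
/-!
Write `i < q ^ m` through its digit vector `f : Fin m → Fin q`. Since `q ≡ 1 [MOD r]`, `i` is
congruent to the digit sum of `f` modulo `r`, and the endpoints `0` and `q ^ m - 1` are both
`≡ 0 [MOD r]`. There are `(q - 1) ^ t` digit vectors with a given support of size `t ≥ 1`, and they
are equidistributed modulo `r`: cycling the digit at one fixed position of the support through
`1, 2, …, q - 1` permutes them and raises the digit sum by `1` modulo `r`, because `r ∣ q - 1`.
-/

open Finset

theorem card_filter_add_eq_of_perm {X G : Type*} [AddGroup G] [DecidableEq G]
    (s : Finset X) (σ : Equiv.Perm X) (w : X → G) (c : G) (hs : ∀ x, σ x ∈ s ↔ x ∈ s)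
    (hw : ∀ x ∈ s, w (σ x) = w x + c) (a : G) :
    #{x ∈ s | w x = a + c} = #{x ∈ s | w x = a} := by
  rw [← card_map σ.toEmbedding (s := {x ∈ s | w x = a})]
  congr 1
  ext y
  obtain ⟨x, rfl⟩ := σ.surjective y
  simp only [mem_filter, mem_map_equiv, Equiv.symm_apply_apply, hs]
  exact and_congr_right fun hx => by rw [hw x hx, add_left_inj]

theorem mul_card_filter_eq_card_of_perm {X : Type*} {r : ℕ} [NeZero r]
    (s : Finset X) (σ : Equiv.Perm X) (w : X → ZMod r) (hs : ∀ x, σ x ∈ s ↔ x ∈ s)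
    (hw : ∀ x ∈ s, w (σ x) = w x + 1) (a : ZMod r) :
    r * #{x ∈ s | w x = a} = #s := by
  have shift (n : ℕ) : #{x ∈ s | w x = a + n} = #{x ∈ s | w x = a} := by
    induction n with
    | zero => simp
    | succ n ih => rw [Nat.cast_succ, ← add_assoc, card_filter_add_eq_of_perm s σ w 1 hs hw, ih]
  calc r * #{x ∈ s | w x = a} = ∑ _b : ZMod r, #{x ∈ s | w x = a} := by
        rw [sum_const, card_univ, ZMod.card, smul_eq_mul]
    _ = ∑ b : ZMod r, #{x ∈ s | w x = b} := sum_congr rfl fun b _ => by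
        rw [← shift (b - a).val, ZMod.natCast_zmod_val, add_sub_cancel]
    _ = #s := (card_eq_sum_card_fiberwise fun x _ => mem_univ (w x)).symm

theorem card_filter_mem_and_eq_sum {α β : Type*} [Fintype α] [DecidableEq β] (g : α → β)
    (T : Finset β) (p : α → Prop) [DecidablePred p] :
    #{x | g x ∈ T ∧ p x} = ∑ t ∈ T, #{x | g x = t ∧ p x} := by
  rw [card_eq_sum_card_fiberwise (f := g) (t := T) fun x hx => (mem_filter.mp hx).2.1]
  refine sum_congr rfl fun t ht => congrArg card (Finset.ext fun x => ?_)
  simp only [mem_filter, mem_univ, true_and]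
  constructor
  · exact fun h => ⟨h.2, h.1.2⟩
  · rintro ⟨rfl, h⟩; exact ⟨⟨ht, h⟩, rfl⟩

/-- The cycle `(1 2 … n)`, fixing `0`. -/
def finCycleNonzero (n : ℕ) : Equiv.Perm (Fin (n + 1)) :=
  (finSuccEquiv n).trans ((finRotate n).optionCongr.trans (finSuccEquiv n).symm)

theorem finCycleNonzero_zero (n : ℕ) : finCycleNonzero n 0 = 0 := by
  simp [finCycleNonzero]

theorem finCycleNonzero_eq_zero_iff {n : ℕ} {d : Fin (n + 1)} :
    finCycleNonzero n d = 0 ↔ d = 0 :=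
  (finCycleNonzero n).injective.eq_iff' (finCycleNonzero_zero n)

theorem natCast_finCycleNonzero {r n : ℕ} (hr : r ∣ n) {d : Fin (n + 1)} (hd : d ≠ 0) :
    ((finCycleNonzero n d : ℕ) : ZMod r) = (d : ℕ) + 1 := by
  obtain ⟨i, rfl⟩ := Fin.exists_succ_eq.mpr hd
  obtain ⟨k, rfl⟩ : ∃ k, n = k + 1 := Nat.exists_eq_add_one.mpr i.pos
  have hn : ((k + 1 : ℕ) : ZMod r) = 0 := (ZMod.natCast_eq_zero_iff _ _).mpr hr
  simp only [finCycleNonzero, Equiv.trans_apply, finSuccEquiv_succ, Equiv.optionCongr_apply,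
    Option.map_some, finSuccEquiv_symm_some, Fin.val_succ, coe_finRotate]
  split_ifs with h
  · subst h
    push_cast at hn ⊢
    simp [hn]
  · push_cast; ring

section DigitVectors

variable {ι : Type*} [Fintype ι] {q : ℕ} [NeZero q]

def digitSupport (f : ι → Fin q) : Finset ι :=
  {j | f j ≠ 0}

def digitSum (r : ℕ) (f : ι → Fin q) : ZMod r :=
  ∑ j, ((f j : ℕ) : ZMod r)

variable [DecidableEq ι]

theorem card_filter_digitSupport_eq (S : Finset ι) :
    #{f : ι → Fin q | digitSupport f = S} = (q - 1) ^ #S := by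
  have : ({f : ι → Fin q | digitSupport f = S} : Finset _) =
      Fintype.piFinset fun j => if j ∈ S then {0}ᶜ else {0} := by
    ext f
    simp only [mem_filter, mem_univ, true_and, Fintype.mem_piFinset, Finset.ext_iff, digitSupport]
    refine forall_congr' fun j => ?_
    split_ifs with h <;> simp [h]
  simp [this, Fintype.card_piFinset, apply_ite card, card_compl]

theorem mul_card_filter_digitSupport_digitSum_eq {r : ℕ} [NeZero r] (hr : r ∣ q - 1)
    {S : Finset ι} (hS : S.Nonempty) (a : ZMod r) :
    r * #{f : ι → Fin q | digitSupport f = S ∧ digitSum r f = a} = (q - 1) ^ #S := by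
  obtain ⟨n, rfl⟩ : ∃ n, q = n + 1 := Nat.exists_eq_add_one.mpr (NeZero.pos q)
  rw [Nat.add_sub_cancel] at hr
  obtain ⟨j₀, hj₀⟩ := hS
  let σ : Equiv.Perm (ι → Fin (n + 1)) := .piCongrRight (Pi.mulSingle j₀ (finCycleNonzero n))
  have hσ (f : ι → Fin (n + 1)) (j : ι) :
      σ f j = if j = j₀ then finCycleNonzero n (f j) else f j := by
    by_cases h : j = j₀
    · subst h; simp [σ]
    · simp [σ, h]
  rw [← card_filter_digitSupport_eq S, ← filter_filter]
  refine mul_card_filter_eq_card_of_perm _ σ (digitSum r) (fun f => ?_) (fun f hf => ?_) a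
  · have : digitSupport (σ f) = digitSupport f := by
      ext j
      simp only [digitSupport, mem_filter, mem_univ, true_and, hσ]
      split_ifs <;> simp [finCycleNonzero_eq_zero_iff]
    simp [this]
  · have hf₀ : f j₀ ≠ 0 := by
      simp only [mem_filter, mem_univ, true_and] at hf
      simpa [← hf, digitSupport] using hj₀
    simp only [digitSum, ← add_sum_erase _ _ (mem_univ j₀), hσ, ↓reduceIte,
      natCast_finCycleNonzero hr hf₀]
    rw [sum_congr rfl fun j hj => by rw [if_neg (ne_of_mem_erase hj)]]
    ring

theorem mul_card_filter_card_digitSupport_digitSum_eq {r : ℕ} [NeZero r] (hr : r ∣ q - 1)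
    {t : ℕ} (ht : t ≠ 0) (a : ZMod r) :
    r * #{f : ι → Fin q | #(digitSupport f) = t ∧ digitSum r f = a} =
      (Fintype.card ι).choose t * (q - 1) ^ t := by
  have hS {S : Finset ι} (hS : S ∈ powersetCard t univ) : #S = t := mem_powersetCard_univ.mp hS
  simp_rw [← mem_powersetCard_univ, card_filter_mem_and_eq_sum, mul_sum]
  rw [sum_congr rfl fun S hS' => mul_card_filter_digitSupport_digitSum_eq hr
    (card_pos.mp ((hS hS').symm ▸ Nat.pos_of_ne_zero ht)) a]
  rw [sum_congr rfl fun S hS' => by rw [hS hS'], sum_const, card_powersetCard, card_univ,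
    smul_eq_mul]

theorem mul_card_filter_card_digitSupport_le_digitSum_eq_one {r : ℕ} (hr₁ : 1 < r)
    (hr : r ∣ q - 1) (ℓ : ℕ) :
    r * #{f : ι → Fin q | #(digitSupport f) ≤ ℓ ∧ digitSum r f = 1} =
      ∑ t ∈ Icc 1 ℓ, (Fintype.card ι).choose t * (q - 1) ^ t := by
  have : Fact (1 < r) := ⟨hr₁⟩
  have hpos (f : ι → Fin q) (hf : digitSum r f = 1) : 1 ≤ #(digitSupport f) := by
    obtain ⟨j, -, hj⟩ := exists_ne_zero_of_sum_ne_zero (hf.trans_ne one_ne_zero)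
    exact card_pos.mpr ⟨j, by simpa [digitSupport] using fun h => hj (by simp [h])⟩
  have : #{f : ι → Fin q | #(digitSupport f) ≤ ℓ ∧ digitSum r f = 1} =
      #{f : ι → Fin q | #(digitSupport f) ∈ Icc 1 ℓ ∧ digitSum r f = 1} := by
    refine congrArg card (filter_congr fun f _ => ?_)
    rw [mem_Icc]
    exact ⟨fun h => ⟨⟨hpos f h.2, h.1⟩, h.2⟩, fun h => ⟨h.1.2, h.2⟩⟩
  rw [this, card_filter_mem_and_eq_sum, mul_sum]
  exact sum_congr rfl fun t ht =>
    mul_card_filter_card_digitSupport_digitSum_eq hr (by rw [mem_Icc] at ht; omega) 1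

end DigitVectors

theorem List.length_filter_ne_zero_eq_card_getD {L : List ℕ} {m : ℕ} (h : L.length ≤ m) :
    (L.filter (· ≠ 0)).length = #{j : Fin m | L.getD j 0 ≠ 0} := by
  induction L generalizing m with
  | nil => simp
  | cons a L ih =>
    obtain ⟨m, rfl⟩ : ∃ k, m = k + 1 := Nat.exists_eq_add_one.mpr (by simp at h; omega)
    rw [Fin.card_filter_univ_succ']
    simp only [Fin.val_zero, List.getD_cons_zero, Fin.val_succ, List.getD_cons_succ]
    rw [← ih (by simpa using h), List.filter_cons]
    split_ifs <;> simp_all [add_comm]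

theorem card_filter_range_pow_eq (q m : ℕ) (P : ℕ → Prop) [DecidablePred P] :
    #{i ∈ range (q ^ m) | P i} = #{f : Fin m → Fin q | P (finFunctionFinEquiv f)} := by
  symm
  refine card_bij (fun f _ => finFunctionFinEquiv f) (fun f hf => ?_) (fun f _ g _ h => ?_)
    fun i hi => ?_
  · simpa using ⟨(finFunctionFinEquiv f).isLt, (mem_filter.mp hf).2⟩
  · exact finFunctionFinEquiv.injective (Fin.ext h)
  · simp only [mem_filter, mem_range] at hi
    refine ⟨finFunctionFinEquiv.symm ⟨i, hi.1⟩, mem_filter.mpr ⟨mem_univ _, ?_⟩, by simp⟩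
    rw [Equiv.apply_symm_apply]
    exact hi.2

theorem length_filter_digits_finFunctionFinEquiv {m q : ℕ} [NeZero q] (hq : 1 < q)
    (f : Fin m → Fin q) :
    ((Nat.digits q (finFunctionFinEquiv f)).filter (· ≠ 0)).length = #(digitSupport f) := by
  rw [List.length_filter_ne_zero_eq_card_getD
    ((Nat.digits_length_le_iff hq _).mpr (finFunctionFinEquiv f).isLt), digitSupport]
  congr! 3 with j
  rw [Nat.getD_digits _ _ hq, ← finFunctionFinEquiv_symm_apply_val, Equiv.symm_apply_apply,
    Fin.val_eq_zero_iff]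

theorem natCast_finFunctionFinEquiv {m q r : ℕ} [NeZero q] (hr : r ∣ q - 1)
    (f : Fin m → Fin q) : ((finFunctionFinEquiv f : ℕ) : ZMod r) = digitSum r f := by
  have hq : (q : ZMod r) = 1 := by
    rw [← Nat.cast_one, ZMod.natCast_eq_natCast_iff]
    exact ((Nat.modEq_iff_dvd' (NeZero.pos q)).mpr hr).symm
  simp [digitSum, hq]

theorem filter_Icc_eq_filter_range_of_dvd {n r : ℕ} (hn : r ∣ n - 1) (P : ℕ → Prop)
    [DecidablePred P] :
    {i ∈ Icc 1 (n - 1 - 1) | P i ∧ i % r = 1} = {i ∈ range n | P i ∧ i % r = 1} := by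
  ext i
  simp only [mem_filter, mem_Icc, mem_range]
  refine ⟨fun ⟨hi, hP⟩ => ⟨by omega, hP⟩, fun ⟨hi, hP⟩ => ⟨⟨?_, ?_⟩, hP⟩⟩
  · exact Nat.pos_of_ne_zero (by rintro rfl; simp at hP)
  · have : i ≠ n - 1 := by rintro rfl; simp [Nat.mod_eq_zero_of_dvd hn] at hP
    omega

theorem stmt_9_general (q m r ℓ : ℕ) (hq : IsPrimePow q) (hr : 1 < r)
    (hrq : r ∣ q - 1) :
    ((Finset.Icc 1 (q ^ m - 1 - 1)).filter
        (fun i => ((Nat.digits q i).filter (· ≠ 0)).length ≤ ℓ ∧ i % r = 1)).card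
      = (∑ t ∈ Finset.Icc 1 ℓ, m.choose t * (q - 1) ^ t) / r := by
  have hq₁ : 1 < q := hq.one_lt
  have : NeZero q := ⟨by omega⟩
  have hmod (i : ℕ) : i % r = 1 ↔ (i : ZMod r) = 1 := by
    have := ZMod.natCast_eq_natCast_iff' i 1 r
    rw [Nat.cast_one, Nat.one_mod_eq_one.mpr (by omega)] at this
    exact this.symm
  have hpow : r ∣ q ^ m - 1 := hrq.trans (by simpa using Nat.sub_dvd_pow_sub_pow q 1 m)
  rw [filter_Icc_eq_filter_range_of_dvd hpow, card_filter_range_pow_eq]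
  simp only [length_filter_digits_finFunctionFinEquiv hq₁, hmod, natCast_finFunctionFinEquiv hrq]
  refine Nat.eq_div_of_mul_eq_right (by omega) ?_
  rw [mul_card_filter_card_digitSupport_le_digitSum_eq_one hr hrq, Fintype.card_fin]

theorem stmt_9 (q m r ℓ : ℕ) (hq : IsPrimePow q) (hm : 2 ≤ m) (hr : 1 < r)
    (hrq : r ∣ q - 1) (hℓ1 : 1 ≤ ℓ) (hℓ2 : ℓ ≤ m - 1) :
    ((Finset.Icc 1 (q ^ m - 1 - 1)).filter
        (fun i => ((Nat.digits q i).filter (· ≠ 0)).length ≤ ℓ ∧ i % r = 1)).card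
      = (∑ t ∈ Finset.Icc 1 ℓ, m.choose t * (q - 1) ^ t) / r :=
  stmt_9_general q m r ℓ hq hr hrq
end

section
/- Let q be a prime power, m ≥ 2, r > 1 a divisor of q-1, 1 ≤ ℓ ≤ m-1, and let C'(q,m,r,ℓ) be the λ-constacyclic code of length n = (q^m-1)/r over GF(q) whose defining set is D' = { i ∈ ℤ_{q^m-1} : 1 ≤ wt(i) ≤ ℓ, i ≡ 1 (mod r) } (relative to a primitive element β of GF(q^m), λ = β^n). Then dim C'(q,m,r,ℓ) = (q^m - Σ_{i=0}^{ℓ} binom(m,i)(q-1)^i)/r. -/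
/-!
Multiplying `i` by `q` modulo `q ^ m - 1` rotates its `m` base-`q` digits; this preserves the
weight and, as `q ≡ 1 (mod r)`, the residue mod `r`. So the Frobenius `x ↦ x ^ q` permutes the
zeros `β ^ i`, `i ∈ D'`, the polynomial `∏ (X - β ^ i)` has coefficients in `GF(q)`, and the code,
i.e. its multiples of degree `< n`, has dimension `n - |D'|`.

Splitting off the lowest digit shows by induction on `m` that the `binom(m, w) (q - 1) ^ w`
numbers below `q ^ m` of weight `w ≥ 1` are equidistributed mod `r`, because the nonzero digits
`1, …, q - 1` are. Hence `r |D'| = ∑_{w=1}^{ℓ} binom(m, w) (q - 1) ^ w`.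
-/

/-- The `λ`-constacyclic code of length `n` over `F` with defining set `D`:
codewords are coefficient vectors `c : Fin n → F` such that `∑ t, c t • β^(i·t) = 0`
for every `i ∈ D`, i.e. the polynomial `c(x)` vanishes at `β^i` for all `i ∈ D`. -/
noncomputable def constaCode {F E : Type*} [Field F] [Field E] [Algebra F E]
    (β : E) (D : Finset ℕ) (n : ℕ) : Submodule F (Fin n → F) :=
  ⨅ i ∈ D, LinearMap.ker
    (∑ t : Fin n, (β ^ (i * (t : ℕ))) •
      ((Algebra.linearMap F E).comp (LinearMap.proj t : (Fin n → F) →ₗ[F] F)))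

open Finset Polynomial Module

namespace ConstacyclicCode

def digitWeight (q i : ℕ) : ℕ := ((Nat.digits q i).filter (· ≠ 0)).length

variable {q : ℕ}

@[simp]
lemma digitWeight_zero : digitWeight q 0 = 0 := by simp [digitWeight]

lemma digitWeight_of_lt {c : ℕ} (hc : c < q) :
    digitWeight q c = if c = 0 then 0 else 1 := by
  rcases eq_or_ne c 0 with rfl | h0
  · simp
  · simp [digitWeight, Nat.digits_of_lt q c h0 hc, h0]

lemma digitWeight_add_mul (hq : 1 < q) {c : ℕ} (hc : c < q) (a : ℕ) :
    digitWeight q (c + q * a) = digitWeight q c + digitWeight q a := by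
  rcases eq_or_ne c 0 with rfl | hc0
  · rcases eq_or_ne a 0 with rfl | ha0
    · simp
    · have hdig := Nat.digits_add q hq 0 a hc (Or.inr ha0)
      rw [zero_add] at hdig
      simp [digitWeight, hdig]
  · simp [digitWeight, Nat.digits_add q hq c a hc (Or.inl hc0), hc0, Nat.digits_of_lt q c hc0 hc,
      add_comm]

lemma digitWeight_eq_zero_iff {i : ℕ} : digitWeight q i = 0 ↔ i = 0 := by
  refine ⟨fun h => ?_, fun h => by simp [h]⟩
  by_contra h0
  rw [digitWeight, List.length_eq_zero_iff, List.filter_eq_nil_iff] at h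
  exact h _ (List.getLast_mem _) (by simpa using Nat.getLast_digit_ne_zero q h0)

lemma digitWeight_add_pow_mul (hq : 1 < q) (k : ℕ) {a : ℕ} (ha : a < q ^ k) (c : ℕ) :
    digitWeight q (a + q ^ k * c) = digitWeight q a + digitWeight q c := by
  induction k generalizing a with
  | zero => simp_all
  | succ k ih =>
    have hdiv : a / q < q ^ k := Nat.div_lt_of_lt_mul (by rwa [mul_comm, ← pow_succ])
    have hmod : a % q < q := Nat.mod_lt a (by omega)
    have hsplit : a + q ^ (k + 1) * c = a % q + q * (a / q + q ^ k * c) := by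
      conv_lhs => rw [← Nat.mod_add_div a q]
      ring
    conv_rhs => rw [← Nat.mod_add_div a q]
    rw [hsplit, digitWeight_add_mul hq hmod, digitWeight_add_mul hq hmod, ih hdiv, add_assoc]

/-- Multiplication by `q` modulo `q ^ m - 1` rotates the `m` base-`q` digits cyclically. -/
lemma digitWeight_mul_mod (hq : 1 < q) {m i : ℕ} (hi : i < q ^ m - 1) :
    digitWeight q (i * q % (q ^ m - 1)) = digitWeight q i := by
  obtain ⟨k, rfl⟩ : ∃ k, m = k + 1 := ⟨m - 1, by rcases m with _ | m <;> simp_all⟩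
  set a := i % q ^ k
  set c := i / q ^ k
  have hP : 0 < q ^ k := pow_pos (by omega) k
  have ha : a < q ^ k := Nat.mod_lt i hP
  have hc : c < q := Nat.div_lt_of_lt_mul (by rw [← pow_succ]; omega)
  have hi_eq : i = a + q ^ k * c := (Nat.mod_add_div i (q ^ k)).symm
  have hlt : c + q * a < q ^ (k + 1) - 1 := by
    rw [pow_succ] at hi ⊢
    rw [hi_eq] at hi
    have h1 := Nat.mul_le_mul_left q (show a + 1 ≤ q ^ k from ha)
    have h2 := Nat.mul_le_mul_left (q ^ k) (show c + 1 ≤ q from hc)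
    have h3 : 1 ≤ q ^ k * q := by nlinarith
    zify [h3] at *
    nlinarith
  have hrot : i * q = (c + q * a) + c * (q ^ (k + 1) - 1) := by
    zify [Nat.one_le_pow (k + 1) q (by omega)]
    rw [hi_eq]; push_cast; ring
  rw [hrot, Nat.add_mul_mod_self_right, Nat.mod_eq_of_lt hlt, digitWeight_add_mul hq hc, hi_eq,
    digitWeight_add_pow_mul hq k ha, add_comm]

lemma sum_range_mul {M : Type*} [AddCommMonoid M] (f : ℕ → M) (q Q : ℕ) :
    ∑ i ∈ range (q * Q), f i = ∑ c ∈ range q, ∑ a ∈ range Q, f (c + q * a) := by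
  induction Q with
  | zero => simp
  | succ Q ih =>
    simp only [mul_add_one, sum_range_add, ih, sum_range_succ, sum_add_distrib]
    simp only [add_comm]

lemma mul_card_filter_natCast_eq {r n : ℕ} [NeZero r] (hrn : r ∣ n) (z : ZMod r) :
    r * #{c ∈ range n | ((c : ℕ) : ZMod r) = z} = n := by
  have hcount : #{c ∈ range n | ((c : ℕ) : ZMod r) = z} = n.count (· ≡ z.val [MOD r]) := by
    rw [Nat.count_eq_card_filter_range]
    refine congrArg _ (filter_congr fun c _ => ?_)
    rw [← ZMod.natCast_eq_natCast_iff, ZMod.natCast_zmod_val]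
  rw [hcount, Nat.count_modEq_card _ (NeZero.pos r), Nat.mod_eq_zero_of_dvd hrn]
  simp [Nat.mul_div_cancel' hrn]

def weightResidueCard (q r m w : ℕ) (z : ZMod r) : ℕ :=
  #{i ∈ range (q ^ m) | digitWeight q i = w ∧ (i : ZMod r) = z}

lemma weightResidueCard_zero (hq : 0 < q) (r m : ℕ) (z : ZMod r) :
    weightResidueCard q r m 0 z = if z = 0 then 1 else 0 := by
  rcases eq_or_ne z 0 with rfl | hz
  · rw [if_pos rfl, weightResidueCard, card_eq_one]
    refine ⟨0, ?_⟩
    ext i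
    simp only [mem_filter, mem_range, digitWeight_eq_zero_iff, mem_singleton]
    constructor
    · exact fun h => h.2.1
    · rintro rfl
      simp [pow_pos hq m]
  · rw [if_neg hz, weightResidueCard, card_eq_zero, filter_eq_empty_iff]
    rintro i - ⟨h0, rfl⟩
    exact hz (by simp [digitWeight_eq_zero_iff.1 h0])

lemma weightResidueCard_succ (hq : 1 < q) {r : ℕ} (hqr : (q : ZMod r) = 1) (m w : ℕ)
    (z : ZMod r) :
    weightResidueCard q r (m + 1) (w + 1) z = weightResidueCard q r m (w + 1) z +
      ∑ c ∈ range (q - 1), weightResidueCard q r m w (z - (c + 1)) := by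
  have hdigit : ∀ c < q, ∀ a,
      (digitWeight q (c + q * a) = w + 1 ∧ ((c + q * a : ℕ) : ZMod r) = z) ↔
        (digitWeight q a = (if c = 0 then w + 1 else w) ∧ (a : ZMod r) = z - c) := by
    intro c hc a
    rw [digitWeight_add_mul hq hc, digitWeight_of_lt hc, eq_sub_iff_add_eq']
    push_cast
    rw [hqr, one_mul]
    rcases eq_or_ne c 0 with rfl | hc0
    · simp
    · simp only [if_neg hc0]
      constructor <;> rintro ⟨h1, h2⟩ <;> exact ⟨by omega, h2⟩
  simp only [weightResidueCard, card_filter]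
  rw [pow_succ', sum_range_mul]
  obtain ⟨p, rfl⟩ : ∃ p, q = p + 1 := ⟨q - 1, by omega⟩
  rw [sum_range_succ', add_comm, Nat.add_sub_cancel]
  congr 1
  · exact sum_congr rfl fun a _ => if_congr ((hdigit 0 (by omega) a).trans (by simp)) rfl rfl
  · refine sum_congr rfl fun c hc => sum_congr rfl fun a _ => if_congr ?_ rfl rfl
    exact (hdigit (c + 1) (by simp at hc; omega) a).trans (by simp)

lemma natCast_eq_one_of_dvd_sub_one {r : ℕ} (hq : 1 ≤ q) (hrq : r ∣ q - 1) :
    (q : ZMod r) = 1 := by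
  simpa using ((ZMod.natCast_eq_natCast_iff _ _ _).2 ((Nat.modEq_iff_dvd' hq).2 hrq)).symm

theorem mul_weightResidueCard (hq : 1 < q) {r : ℕ} [NeZero r] (hrq : r ∣ q - 1) (m w : ℕ)
    (z : ZMod r) :
    r * weightResidueCard q r m (w + 1) z = m.choose (w + 1) * (q - 1) ^ (w + 1) := by
  have hqr := natCast_eq_one_of_dvd_sub_one hq.le hrq
  induction m generalizing w z with
  | zero => simp [weightResidueCard]
  | succ m ih =>
    rw [weightResidueCard_succ hq hqr, mul_add, ih]
    cases w with
    | zero =>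
      have hsum : ∑ c ∈ range (q - 1), weightResidueCard q r m 0 (z - (c + 1))
          = #{c ∈ range (q - 1) | ((c : ℕ) : ZMod r) = z - 1} := by
        rw [card_filter]
        refine sum_congr rfl fun c _ => ?_
        rw [weightResidueCard_zero (by omega)]
        exact if_congr (by rw [sub_eq_zero, eq_sub_iff_add_eq, eq_comm]) rfl rfl
      rw [hsum, mul_card_filter_natCast_eq hrq]
      simp only [Nat.choose_one_right, zero_add, pow_one]
      ring
    | succ w =>
      simp only [mul_sum, ih, sum_const, card_range, smul_eq_mul, Nat.choose_succ_succ' m (w + 1)]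
      ring

lemma dvd_pow_sub_one {r : ℕ} (hrq : r ∣ q - 1) (m : ℕ) : r ∣ q ^ m - 1 :=
  hrq.trans (by simpa only [one_pow] using Nat.sub_dvd_pow_sub_pow q 1 m)

def definingSet (q m r ℓ : ℕ) : Finset ℕ :=
  (range (q ^ m - 1)).filter (fun i => 1 ≤ digitWeight q i ∧ digitWeight q i ≤ ℓ ∧ i % r = 1)

variable {m r ℓ : ℕ}

lemma mul_mod_mem_definingSet (hq : 1 < q) (hrq : r ∣ q - 1) {i : ℕ}
    (hi : i ∈ definingSet q m r ℓ) : i * q % (q ^ m - 1) ∈ definingSet q m r ℓ := by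
  simp only [definingSet, mem_filter, mem_range] at hi ⊢
  obtain ⟨hi, hw1, hwℓ, hres⟩ := hi
  have hres' : i * q % (q ^ m - 1) % r = i % r := by
    rw [Nat.mod_mod_of_dvd _ (dvd_pow_sub_one hrq m), ← ZMod.natCast_eq_natCast_iff', Nat.cast_mul,
      natCast_eq_one_of_dvd_sub_one hq.le hrq, mul_one]
  rw [digitWeight_mul_mod hq hi, hres']
  exact ⟨Nat.mod_lt _ (by omega), hw1, hwℓ, hres⟩

/-- Since `q ^ m - 1 ≡ 0 (mod r)`, the defining set may as well be cut out of `range (q ^ m)`. -/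
lemma mul_card_definingSet (hq : 1 < q) (hr : 1 < r) (hrq : r ∣ q - 1) :
    r * #(definingSet q m r ℓ) = ∑ w ∈ range ℓ, m.choose (w + 1) * (q - 1) ^ (w + 1) := by
  have : NeZero r := ⟨by omega⟩
  have : Fact (1 < r) := ⟨hr⟩
  have hres : ∀ i, i % r = 1 ↔ (i : ZMod r) = 1 := fun i => by
    rw [← Nat.cast_one (R := ZMod r), ZMod.natCast_eq_natCast_iff', Nat.mod_eq_of_lt hr]
  have hlast : ((q ^ m - 1 : ℕ) : ZMod r) ≠ 1 := by
    rw [(ZMod.natCast_eq_zero_iff _ _).2 (dvd_pow_sub_one hrq m)]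
    exact zero_ne_one
  have hset : definingSet q m r ℓ
      = {i ∈ range (q ^ m) | digitWeight q i - 1 < ℓ ∧ 1 ≤ digitWeight q i ∧ (i : ZMod r) = 1} := by
    ext i
    simp only [definingSet, mem_filter, mem_range, hres]
    constructor
    · rintro ⟨hi, h1, h2, h3⟩
      exact ⟨by omega, by omega, h1, h3⟩
    · rintro ⟨hi, h1, h2, h3⟩
      refine ⟨lt_of_le_of_ne (by omega) fun h => hlast (h ▸ h3), h2, by omega, h3⟩
  rw [hset, card_eq_sum_card_fiberwise (f := fun i => digitWeight q i - 1) (t := range ℓ)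
    (fun i hi => by simpa using (mem_filter.1 hi).2.1), mul_sum]
  refine sum_congr rfl fun w hwℓ => ?_
  rw [mem_range] at hwℓ
  rw [← mul_weightResidueCard hq hrq m w 1, weightResidueCard, filter_filter]
  congr 2
  refine filter_congr fun i _ => ⟨fun ⟨⟨_, h1, h⟩, hw⟩ => ⟨by omega, h⟩, fun ⟨hw, h⟩ => ?_⟩
  exact ⟨⟨by omega, by omega, h⟩, by omega⟩

section Multiples

variable {K : Type*} [Field K] {g : K[X]}

lemma mul_mem_degreeLT_iff (hg : g ≠ 0) {n : ℕ} {u : K[X]} :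
    g * u ∈ degreeLT K n ↔ u ∈ degreeLT K (n - g.natDegree) := by
  rcases eq_or_ne u 0 with rfl | hu
  · simp only [mul_zero, Submodule.zero_mem]
  · rw [mem_degreeLT, mem_degreeLT, degree_eq_natDegree (mul_ne_zero hg hu),
      degree_eq_natDegree hu, Nat.cast_lt, Nat.cast_lt, natDegree_mul hg hu]
    omega

theorem finrank_span_inf_degreeLT (hg : g ≠ 0) (n : ℕ) :
    finrank K ↥((Ideal.span {g}).restrictScalars K ⊓ degreeLT K n) = n - g.natDegree := by
  have hset : (Ideal.span {g}).restrictScalars K ⊓ degreeLT K n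
      = (degreeLT K (n - g.natDegree)).map (LinearMap.mulLeft K g) := by
    ext p
    simp only [Submodule.mem_inf, Submodule.restrictScalars_mem, Ideal.mem_span_singleton,
      Submodule.mem_map, LinearMap.mulLeft_apply]
    constructor
    · rintro ⟨⟨u, rfl⟩, hp⟩
      exact ⟨u, (mul_mem_degreeLT_iff hg).1 hp, rfl⟩
    · rintro ⟨u, hu, rfl⟩
      exact ⟨dvd_mul_right g u, (mul_mem_degreeLT_iff hg).2 hu⟩
  rw [hset, ← (Submodule.equivMapOfInjective _ (mul_right_injective₀ hg) _).finrank_eq,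
    (degreeLTEquiv K _).finrank_eq, finrank_fin_fun]

end Multiples

section Descent

variable {F E : Type*} [Field F] [Field E] [Algebra F E]

lemma dvd_iff_forall_aeval_eq_zero {S : Finset E} {g : F[X]}
    (hg : g.map (algebraMap F E) = ∏ x ∈ S, (X - C x)) (p : F[X]) :
    g ∣ p ↔ ∀ x ∈ S, aeval x p = 0 := by
  rw [← map_dvd_map' (algebraMap F E), hg]
  simp only [aeval_def, eval₂_eq_eval_map, ← IsRoot.def, ← dvd_iff_isRoot]
  exact ⟨fun h x hx => (dvd_prod_of_mem (fun x => X - C x) hx).trans h, fun h =>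
    prod_dvd_of_coprime ((pairwise_coprime_X_sub_C Function.injective_id).set_pairwise _) h⟩

variable [Fintype F]

lemma mem_range_algebraMap_of_pow_card_eq_self {x : E} (hx : x ^ Fintype.card F = x) :
    x ∈ Set.range (algebraMap F E) := by
  have hsplit : (X ^ Fintype.card F - X : F[X]).Splits := by
    simpa [Nat.card_eq_fintype_card] using splits_X_pow_nat_card_sub_X (K := F)
  have hne : (X ^ Fintype.card F - X : F[X]).map (algebraMap F E) ≠ 0 :=
    (Polynomial.map_ne_zero_iff (algebraMap F E).injective).2
      (FiniteField.X_pow_card_sub_X_ne_zero F Fintype.one_lt_card)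
  have hroot : x ∈ ((X ^ Fintype.card F - X : F[X]).map (algebraMap F E)).roots := by
    rw [mem_roots hne]
    simp [hx]
  rw [hsplit.roots_map_of_injective (algebraMap F E).injective,
    FiniteField.roots_X_pow_card_sub_X] at hroot
  obtain ⟨y, -, rfl⟩ := Multiset.mem_map.1 hroot
  exact ⟨y, rfl⟩

/-- The Frobenius `x ↦ x ^ #F` permutes `S`, so it fixes `∏ (X - x)` and hence its coefficients. -/
lemma prod_X_sub_C_mem_lifts (S : Finset E) (hS : ∀ x ∈ S, x ^ Fintype.card F ∈ S) :
    (∏ x ∈ S, (X - C x)) ∈ lifts (algebraMap F E) := by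
  classical
  set φ := FiniteField.frobeniusAlgHom F E
  have hφ : Function.Injective φ := φ.toRingHom.injective
  have himage : S.image φ = S :=
    eq_of_subset_of_card_le (image_subset_iff.2 hS) (card_image_of_injective _ hφ).ge
  have hfix : (∏ x ∈ S, (X - C x)).map (φ : E →+* E) = ∏ x ∈ S, (X - C x) := by
    simp only [Polynomial.map_prod, Polynomial.map_sub, map_X, map_C]
    conv_rhs => rw [← himage]
    rw [prod_image hφ.injOn]
    rfl
  rw [lifts_iff_coeff_lifts]
  intro k
  apply mem_range_algebraMap_of_pow_card_eq_self
  simpa [coeff_map, φ] using congrArg (coeff · k) hfix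

end Descent

lemma mem_constaCode_iff {F E : Type*} [Field F] [Field E] [Algebra F E] (β : E)
    (D : Finset ℕ) (n : ℕ) (c : Fin n → F) :
    c ∈ constaCode β D n ↔ ∀ i ∈ D, aeval (β ^ i) ((degreeLTEquiv F n).symm c : F[X]) = 0 := by
  have haeval : ∀ i, aeval (β ^ i) ((degreeLTEquiv F n).symm c : F[X])
      = ∑ t : Fin n, β ^ (i * (t : ℕ)) * algebraMap F E (c t) := fun i => by
    change aeval (β ^ i) (∑ t : Fin n, monomial (t : ℕ) (c t)) = _
    simp only [map_sum, aeval_monomial, ← pow_mul, mul_comm]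
  simp [constaCode, haeval]

theorem finrank_constaCode {F E : Type*} [Field F] [Fintype F] [Field E] [Algebra F E]
    (β : E) (D : Finset ℕ) (n : ℕ) (hinj : Set.InjOn (β ^ ·) D)
    (hfrob : ∀ i ∈ D, ∃ j ∈ D, β ^ j = (β ^ i) ^ Fintype.card F) :
    finrank F (constaCode (F := F) β D n) = n - #D := by
  classical
  set S := D.image (β ^ ·)
  have hS : ∀ x ∈ S, x ^ Fintype.card F ∈ S := by
    simp only [S, mem_image]
    rintro _ ⟨i, hi, rfl⟩
    obtain ⟨j, hj, h⟩ := hfrob i hi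
    exact ⟨j, hj, h⟩
  obtain ⟨g, hgmap, hgdeg, hgmonic⟩ := lifts_and_natDegree_eq_and_monic
    (prod_X_sub_C_mem_lifts S hS) (monic_prod_of_monic _ _ fun x _ => monic_X_sub_C x)
  have hdeg : g.natDegree = #D := by
    rw [hgdeg, ← card_image_of_injOn hinj]
    exact natDegree_finsetProd_X_sub_C_eq_card S id
  set Φ : (Fin n → F) →ₗ[F] F[X] :=
    (degreeLT F n).subtype ∘ₗ (degreeLTEquiv F n).symm.toLinearMap
  have hΦ : Function.Injective Φ := Subtype.val_injective.comp (degreeLTEquiv F n).symm.injective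
  have hmap : (constaCode β D n).map Φ = (Ideal.span {g}).restrictScalars F ⊓ degreeLT F n := by
    ext p
    simp only [Submodule.mem_map, Submodule.mem_inf, Submodule.restrictScalars_mem,
      Ideal.mem_span_singleton, dvd_iff_forall_aeval_eq_zero hgmap, S, forall_mem_image,
      mem_constaCode_iff]
    constructor
    · rintro ⟨c, hc, rfl⟩
      exact ⟨hc, ((degreeLTEquiv F n).symm c).2⟩
    · rintro ⟨hp, hpn⟩
      refine ⟨degreeLTEquiv F n ⟨p, hpn⟩, ?_, by simp [Φ]⟩
      simpa using hp
  rw [(Submodule.equivMapOfInjective Φ hΦ _).finrank_eq, hmap,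
    finrank_span_inf_degreeLT hgmonic.ne_zero, hdeg]

end ConstacyclicCode

open Finset ConstacyclicCode in
theorem stmt_10_general {F E : Type*} [Field F] [Fintype F] [Field E] [Algebra F E]
    (q m r ℓ : ℕ) (hq : q = Fintype.card F)
    (hr : 1 < r) (hrq : r ∣ q - 1)
    (β : E) (hβ : orderOf β = q ^ m - 1) :
    Module.finrank F ↥(constaCode (F := F) β
        ((Finset.range (q ^ m - 1)).filter
          (fun i => 1 ≤ ((Nat.digits q i).filter (· ≠ 0)).length ∧
            ((Nat.digits q i).filter (· ≠ 0)).length ≤ ℓ ∧ i % r = 1))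
        ((q ^ m - 1) / r))
      = (q ^ m - ∑ i ∈ Finset.range (ℓ + 1), m.choose i * (q - 1) ^ i) / r := by
  have hq1 : 1 < q := hq ▸ Fintype.one_lt_card
  have hlt : ∀ i ∈ definingSet q m r ℓ, i < orderOf β := fun i hi => by
    simpa [hβ] using (mem_filter.1 hi).1
  have hfrob : ∀ i ∈ definingSet q m r ℓ, ∃ j ∈ definingSet q m r ℓ, β ^ j = (β ^ i) ^ q :=
    fun i hi => ⟨_, mul_mod_mem_definingSet hq1 hrq hi, by rw [← hβ, pow_mod_orderOf, pow_mul]⟩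
  refine (finrank_constaCode β (definingSet q m r ℓ) _
    (fun i hi j hj h => pow_injOn_Iio_orderOf (hlt i hi) (hlt j hj) h) (hq ▸ hfrob)).trans ?_
  obtain ⟨a, ha⟩ := dvd_pow_sub_one hrq m
  have hr0 : 0 < r := by omega
  rw [sum_range_succ', Nat.choose_zero_right, pow_zero, mul_one, add_comm, ← Nat.sub_sub, ha,
    ← mul_card_definingSet hq1 hr hrq, ← Nat.mul_sub, Nat.mul_div_cancel_left _ hr0,
    Nat.mul_div_cancel_left _ hr0]

theorem stmt_10 {F E : Type*} [Field F] [Fintype F] [Field E] [Fintype E] [Algebra F E]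
    (q m r ℓ : ℕ) (hq : q = Fintype.card F) (hE : Fintype.card E = q ^ m)
    (hm : 2 ≤ m) (hr : 1 < r) (hrq : r ∣ q - 1) (hℓ1 : 1 ≤ ℓ) (hℓ2 : ℓ ≤ m - 1)
    (β : E) (hβ : orderOf β = q ^ m - 1) :
    Module.finrank F ↥(constaCode (F := F) β
        ((Finset.range (q ^ m - 1)).filter
          (fun i => 1 ≤ ((Nat.digits q i).filter (· ≠ 0)).length ∧
            ((Nat.digits q i).filter (· ≠ 0)).length ≤ ℓ ∧ i % r = 1))
        ((q ^ m - 1) / r))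
      = (q ^ m - ∑ i ∈ Finset.range (ℓ + 1), m.choose i * (q - 1) ^ i) / r :=
  stmt_10_general q m r ℓ hq hr hrq β hβ
end

section
/- Let q be a prime power, m ≥ 2, r > 1 a divisor of q-1, and 1 ≤ ℓ ≤ m-1. The minimum distance of the λ-constacyclic code C'(q,m,r,ℓ) of length n = (q^m-1)/r with defining set { i ∈ ℤ_{q^m-1} : 1 ≤ wt(i) ≤ ℓ, i ≡ 1 (mod r) } satisfies d(C'(q,m,r,ℓ)) ≥ ⌊(q^{ℓ+1} - 1 - 2(q-1)) / (r(q-1))⌋ + 2. -/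
private lemma geom_mul_aux (q : ℕ) (hq : 1 ≤ q) :
    ∀ k, (∑ s ∈ Finset.range k, q ^ s) * (q - 1) + 1 = q ^ k := by
  intro k
  induction k with
  | zero => simp
  | succ k IH =>
    rw [Finset.sum_range_succ, add_mul, pow_succ]
    have h1 : 1 ≤ q ^ k := Nat.one_le_pow _ _ (by omega)
    have : q ^ k * (q - 1) + q ^ k = q ^ k * q := by
      have h2 : q ^ k * (q - 1) + q ^ k = q ^ k * ((q - 1) + 1) := by ring
      rw [h2]; congr 1; omega
    omega

private lemma wt_pos_aux {q i : ℕ} (hi : i ≠ 0) :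
    1 ≤ ((Nat.digits q i).filter (· ≠ 0)).length := by
  have hne := (Nat.digits_ne_nil_iff_ne_zero (b := q)).mpr hi
  have hlast := Nat.getLast_digit_ne_zero q hi
  have hmem : (Nat.digits q i).getLast hne ∈ Nat.digits q i := List.getLast_mem hne
  have h2 : (Nat.digits q i).getLast hne ∈ (Nat.digits q i).filter (· ≠ 0) :=
    List.mem_filter.mpr ⟨hmem, by simpa using hlast⟩
  exact List.length_pos_iff.mpr (List.ne_nil_of_mem h2)

private lemma wt_geom_le_aux {q : ℕ} (hq : 2 ≤ q) :
    ∀ i : ℕ, ∑ s ∈ Finset.range (((Nat.digits q i).filter (· ≠ 0)).length), q ^ s ≤ i := by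
  intro i
  induction i using Nat.strong_induction_on with
  | _ i IH =>
    rcases Nat.eq_zero_or_pos i with h0 | h0
    · subst h0; simp
    · have hdiv : i / q < i := Nat.div_lt_self h0 (by omega)
      have IH' := IH (i / q) hdiv
      rw [Nat.digits_def' (by omega : 1 < q) h0]
      by_cases hmod : i % q = 0
      · rw [List.filter_cons_of_neg (by simp [hmod])]
        exact IH'.trans (Nat.div_le_self _ _)
      · rw [List.filter_cons_of_pos (by simp [hmod]), List.length_cons]
        rw [geom_sum_succ]
        have hdm := Nat.div_add_mod i q
        have h1 : 1 ≤ i % q := Nat.pos_of_ne_zero hmod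
        have h2 : q * (∑ s ∈ Finset.range
              (((Nat.digits q (i / q)).filter (· ≠ 0)).length), q ^ s) ≤ q * (i / q) :=
          Nat.mul_le_mul_left _ IH'
        omega

set_option maxHeartbeats 1000000 in
theorem stmt_11 {F E : Type*} [Field F] [Fintype F] [DecidableEq F] [Field E] [Fintype E]
    [Algebra F E]
    (q m r ℓ : ℕ) (hq : q = Fintype.card F) (hE : Fintype.card E = q ^ m)
    (hm : 2 ≤ m) (hr : 1 < r) (hrq : r ∣ q - 1) (hℓ1 : 1 ≤ ℓ) (hℓ2 : ℓ ≤ m - 1)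
    (β : E) (hβ : orderOf β = q ^ m - 1) :
    ∀ c ∈ constaCode (F := F) β
        ((Finset.range (q ^ m - 1)).filter
          (fun i => 1 ≤ ((Nat.digits q i).filter (· ≠ 0)).length ∧
            ((Nat.digits q i).filter (· ≠ 0)).length ≤ ℓ ∧ i % r = 1))
        ((q ^ m - 1) / r),
      c ≠ 0 →
        (q ^ (ℓ + 1) - 1 - 2 * (q - 1)) / (r * (q - 1)) + 2 ≤
          (Finset.univ.filter (fun t => c t ≠ 0)).card := by
  intro c hc hc0
  by_contra hlt
  push_neg at hlt
  set δ := (q ^ (ℓ + 1) - 1 - 2 * (q - 1)) / (r * (q - 1)) with hδ_def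
  set S := Finset.univ.filter (fun t => c t ≠ 0) with hS_def
  -- basic numerics
  have hq2 : 2 ≤ q := by
    rw [hq]; exact Fintype.one_lt_card
  have hq1dvd : (q - 1) ∣ q ^ m - 1 := by
    simpa using Nat.sub_dvd_pow_sub_pow q 1 m
  have hrdvd : r ∣ q ^ m - 1 := hrq.trans hq1dvd
  have hnr : (q ^ m - 1) / r * r = q ^ m - 1 := Nat.div_mul_cancel hrdvd
  have hqm4 : 4 ≤ q ^ m := by
    calc (4 : ℕ) = 2 ^ 2 := by norm_num
    _ ≤ q ^ m := Nat.pow_le_pow_left hq2 2 |>.trans (Nat.pow_le_pow_right (by omega) hm)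
  -- membership in the defining set
  have hD : ∀ j : ℕ, j ≤ δ → (1 + r * j) ∈
      ((Finset.range (q ^ m - 1)).filter
        (fun i => 1 ≤ ((Nat.digits q i).filter (· ≠ 0)).length ∧
          ((Nat.digits q i).filter (· ≠ 0)).length ≤ ℓ ∧ i % r = 1)) := by
    intro j hj
    set i := 1 + r * j with hi_def
    have hAle : δ * (r * (q - 1)) ≤ q ^ (ℓ + 1) - 1 - 2 * (q - 1) := Nat.div_mul_le_self _ _
    have hjle : j * (r * (q - 1)) ≤ δ * (r * (q - 1)) := Nat.mul_le_mul_right _ hj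
    have hPl : q ^ (ℓ + 1) = (∑ s ∈ Finset.range (ℓ + 1), q ^ s) * (q - 1) + 1 :=
      (geom_mul_aux q (by omega) (ℓ + 1)).symm
    have hP2 : 2 * (q - 1) + 1 ≤ q ^ (ℓ + 1) := by
      have h2 : (2 : ℕ) ≤ ∑ s ∈ Finset.range (ℓ + 1), q ^ s := by
        have hsub : Finset.range 2 ⊆ Finset.range (ℓ + 1) := by
          apply Finset.range_subset_range.mpr; omega
        calc (2 : ℕ) ≤ ∑ s ∈ Finset.range 2, q ^ s := by simp; omega
        _ ≤ _ := Finset.sum_le_sum_of_subset hsub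
      have := Nat.mul_le_mul_right (q - 1) h2
      omega
    have hi_mul : i * (q - 1) + (q - 1) ≤ q ^ (ℓ + 1) - 1 := by
      have : i * (q - 1) = (q - 1) + j * (r * (q - 1)) := by
        rw [hi_def]; ring
      omega
    -- weight ≤ ℓ
    have hwt : ((Nat.digits q i).filter (· ≠ 0)).length ≤ ℓ := by
      by_contra hw
      push_neg at hw
      have hG : ∑ s ∈ Finset.range (ℓ + 1), q ^ s ≤ i := by
        refine le_trans ?_ (wt_geom_le_aux hq2 i)
        apply Finset.sum_le_sum_of_subset
        apply Finset.range_subset_range.mpr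
        omega
      have hGmul : (∑ s ∈ Finset.range (ℓ + 1), q ^ s) * (q - 1) ≤ i * (q - 1) :=
        Nat.mul_le_mul_right _ hG
      omega
    -- i < q^m - 1
    have hpow : q ^ (ℓ + 1) ≤ q ^ m := Nat.pow_le_pow_right (by omega) (by omega)
    have hii : i ≤ i * (q - 1) := Nat.le_mul_of_pos_right _ (by omega)
    have hirange : i < q ^ m - 1 := by omega
    refine Finset.mem_filter.mpr ⟨Finset.mem_range.mpr hirange, wt_pos_aux (by omega), hwt, ?_⟩
    rw [hi_def, Nat.add_mul_mod_self_left]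
    exact Nat.one_mod_eq_one.mpr (by omega)
  -- the vanishing equations
  have hmem : ∀ i ∈ ((Finset.range (q ^ m - 1)).filter
      (fun i => 1 ≤ ((Nat.digits q i).filter (· ≠ 0)).length ∧
        ((Nat.digits q i).filter (· ≠ 0)).length ≤ ℓ ∧ i % r = 1)),
      ∑ t : Fin ((q ^ m - 1) / r), β ^ (i * (t : ℕ)) * algebraMap F E (c t) = 0 := by
    intro i hi
    have h1 := (Submodule.mem_iInf _).mp hc i
    have h2 := (Submodule.mem_iInf _).mp h1 hi
    rw [LinearMap.mem_ker] at h2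
    simpa [LinearMap.sum_apply, LinearMap.smul_apply, LinearMap.comp_apply,
      Algebra.linearMap_apply, smul_eq_mul] using h2
  -- β is nonzero
  have hβ0 : β ≠ 0 := by
    intro h
    have h1 : β ^ (q ^ m - 1) = 1 := by rw [← hβ]; exact pow_orderOf_eq_one β
    rw [h, zero_pow (show q ^ m - 1 ≠ 0 by omega)] at h1
    exact zero_ne_one h1
  set w := S.card with hw_def
  have hw1 : 1 ≤ w := by
    obtain ⟨t, ht⟩ := Function.ne_iff.mp hc0
    simp only [Pi.zero_apply] at ht
    have : t ∈ S := by simp [hS_def, ht]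
    exact Finset.card_pos.mpr ⟨t, this⟩
  have hwδ : w ≤ δ + 1 := by omega
  set g : Fin w → Fin ((q ^ m - 1) / r) := fun k => ((S.equivFin.symm k : S) : Fin ((q ^ m - 1) / r)) with hg_def
  have hginj : Function.Injective g :=
    Subtype.val_injective.comp S.equivFin.symm.injective
  have hgmem : ∀ k, c (g k) ≠ 0 := by
    intro k
    have hmemS := (S.equivFin.symm k).2
    simp only [hS_def, Finset.mem_filter] at hmemS
    exact hmemS.2
  -- order of β^r
  have hβr : orderOf (β ^ r) = (q ^ m - 1) / r := by
    rw [orderOf_pow' β (by omega : r ≠ 0), hβ, Nat.gcd_eq_right hrdvd]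
  set x : Fin w → E := fun k => (β ^ r) ^ ((g k : Fin ((q ^ m - 1) / r)) : ℕ) with hx_def
  have hxinj : Function.Injective x := by
    intro k1 k2 h
    apply hginj
    apply Fin.ext
    refine pow_injOn_Iio_orderOf ?_ ?_ h
    · rw [Set.mem_Iio, hβr]; exact (g k1).isLt
    · rw [Set.mem_Iio, hβr]; exact (g k2).isLt
  set b : Fin w → E := fun k => β ^ ((g k : Fin ((q ^ m - 1) / r)) : ℕ) * algebraMap F E (c (g k)) with hb_def
  -- the Vandermonde system
  have hvec : ∀ j : Fin w, ∑ k, x k ^ (j : ℕ) * b k = 0 := by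
    intro j
    have hjδ : (j : ℕ) ≤ δ := by
      have := j.isLt
      omega
    have heq := hmem _ (hD j hjδ)
    -- restrict to support
    have hres : ∑ t ∈ S, β ^ ((1 + r * (j : ℕ)) * (t : ℕ)) * algebraMap F E (c t) = 0 := by
      rw [← heq]
      apply Finset.sum_subset (Finset.subset_univ S)
      intro t _ ht
      have hct : c t = 0 := by
        by_contra h
        exact ht (by simp [hS_def, h])
      rw [hct, map_zero, mul_zero]
    have hstep : ∀ k : Fin w,
        x k ^ (j : ℕ) * b k
          = β ^ ((1 + r * (j : ℕ)) * ((g k : Fin ((q ^ m - 1) / r)) : ℕ))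
              * algebraMap F E (c (g k)) := by
      intro k
      rw [hx_def, hb_def]
      simp only
      rw [← pow_mul, ← pow_mul, ← mul_assoc, ← pow_add]
      congr 2
      ring
    calc ∑ k, x k ^ (j : ℕ) * b k
        = ∑ t : S, β ^ ((1 + r * (j : ℕ)) * ((t : Fin ((q ^ m - 1) / r)) : ℕ))
              * algebraMap F E (c t) := by
          refine Fintype.sum_equiv S.equivFin.symm _ _ (fun k => ?_)
          exact hstep k
      _ = ∑ t ∈ S, β ^ ((1 + r * (j : ℕ)) * (t : ℕ)) * algebraMap F E (c t) :=
          Finset.sum_coe_sort S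
            (fun t : Fin ((q ^ m - 1) / r) =>
              β ^ ((1 + r * (j : ℕ)) * (t : ℕ)) * algebraMap F E (c t))
      _ = 0 := hres
  have hdet : (Matrix.transpose (Matrix.vandermonde x)).det ≠ 0 := by
    rw [Matrix.det_transpose]
    exact Matrix.det_vandermonde_ne_zero_iff.mpr hxinj
  have hmul : (Matrix.transpose (Matrix.vandermonde x)).mulVec b = 0 := by
    funext j
    have hexp : (Matrix.transpose (Matrix.vandermonde x)).mulVec b j = ∑ k, x k ^ (j : ℕ) * b k := by
      simp [Matrix.mulVec, dotProduct, Matrix.transpose_apply,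
        Matrix.vandermonde_apply]
    rw [hexp, hvec j]
    rfl
  have hb0 := Matrix.eq_zero_of_mulVec_eq_zero hdet hmul
  have hk0 : b ⟨0, hw1⟩ = 0 := by rw [hb0]; rfl
  rw [hb_def] at hk0
  simp only at hk0
  rcases mul_eq_zero.mp hk0 with h | h
  · exact pow_ne_zero _ hβ0 h
  · exact hgmem _ ((map_eq_zero_iff _ (algebraMap F E).injective).mp h)
end

section
/- Let q ≥ 3 be a prime power, m ≥ 2, r a divisor of q-1 with r > 1, and let ℓ = rℓ_1 + ℓ_0 with 0 ≤ ℓ_0 ≤ r-1 and 0 ≤ ℓ < m(q-1) - 1. If ℓ_1 = 0 and ℓ_0 ≤ r-2 (i.e. ℓ ≤ r-2), then the set D = { i ∈ ℤ_{q^m-1} : wt_q(i) < (q-1)m - ℓ and wt_q(i) ≡ 1 (mod r) } equals the full set { i ∈ ℤ_{q^m-1} : wt_q(i) ≡ 1 (mod r) }; otherwise D equals the set with ℓ replaced by rℓ_2 + r - 1, where ℓ_2 = ℓ_1 if ℓ_0 = r-1 and ℓ_2 = ℓ_1 - 1 otherwise. -/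
lemma sum_digits_le_aux (q : ℕ) (hq : 2 ≤ q) : ∀ m i, i < q ^ m → (Nat.digits q i).sum ≤ (q - 1) * m := by
  intro m
  induction m with
  | zero =>
    intro i hi
    simp only [pow_zero] at hi
    have : i = 0 := by omega
    simp [this]
  | succ n ih =>
    intro i hi
    rcases Nat.eq_zero_or_pos i with h0 | h0
    · simp [h0]
    · rw [Nat.digits_def' (by omega : 1 < q) h0]
      have h1 : i / q < q ^ n := by
        rw [Nat.div_lt_iff_lt_mul (by omega : 0 < q)]
        calc i < q ^ (n + 1) := hi
        _ = q ^ n * q := by ring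
      have h2 := ih (i / q) h1
      have h3 : i % q < q := Nat.mod_lt _ (by omega)
      simp only [List.sum_cons]
      have : (q - 1) * (n + 1) = (q - 1) * n + (q - 1) := by ring
      omega

lemma key_aux (r M S : ℕ) (hr : 1 < r) (hM : r ∣ M) (hS : S % r = 1) (hSM : S ≤ M) :
    S + (r - 1) ≤ M := by
  set d := M - S with hd
  have hadd : S + d = M := by omega
  have hMr : M % r = 0 := Nat.eq_zero_of_dvd_of_lt hM |> fun _ => Nat.mod_eq_zero_of_dvd hM
  have h0 : (S + d) % r = 0 := by rw [hadd]; exact hMr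
  rw [Nat.add_mod, hS] at h0
  have hdr : d % r < r := Nat.mod_lt _ (by omega)
  have h1 : (1 + d % r) % r = 0 := h0
  have : r ∣ (1 + d % r) := Nat.dvd_of_mod_eq_zero h1
  have h2 : 1 + d % r = r := by
    have := Nat.le_of_dvd (by omega) this
    omega
  have := Nat.mod_le d r
  omega

theorem stmt_15 (q m r ℓ ℓ₀ ℓ₁ : ℕ) (hq : 3 ≤ q) (hqpp : IsPrimePow q) (hm : 2 ≤ m)
    (hr : 1 < r) (hrq : r ∣ q - 1) (hℓ : ℓ = r * ℓ₁ + ℓ₀) (hℓ₀ : ℓ₀ ≤ r - 1)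
    (hℓm : ℓ < m * (q - 1) - 1) :
    ((ℓ₁ = 0 ∧ ℓ₀ ≤ r - 2) →
      (Finset.range (q ^ m - 1)).filter
          (fun i => (Nat.digits q i).sum < (q - 1) * m - ℓ ∧ (Nat.digits q i).sum % r = 1)
        = (Finset.range (q ^ m - 1)).filter (fun i => (Nat.digits q i).sum % r = 1)) ∧
    (¬ (ℓ₁ = 0 ∧ ℓ₀ ≤ r - 2) →
      (Finset.range (q ^ m - 1)).filter
          (fun i => (Nat.digits q i).sum < (q - 1) * m - ℓ ∧ (Nat.digits q i).sum % r = 1)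
        = (Finset.range (q ^ m - 1)).filter
          (fun i => (Nat.digits q i).sum <
              (q - 1) * m - (r * (if ℓ₀ = r - 1 then ℓ₁ else ℓ₁ - 1) + r - 1) ∧
            (Nat.digits q i).sum % r = 1)) := by
  have hcomm : (q - 1) * m = m * (q - 1) := Nat.mul_comm _ _
  have hrM : r ∣ (q - 1) * m := Dvd.dvd.mul_right hrq m
  -- main facts for any i in range
  have main : ∀ i ∈ Finset.range (q ^ m - 1), (Nat.digits q i).sum % r = 1 →
      (Nat.digits q i).sum + (r - 1) ≤ (q - 1) * m := by
    intro i hi hmod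
    have hi' : i < q ^ m := by
      have := Finset.mem_range.mp hi
      have : q ^ m - 1 ≤ q ^ m := Nat.sub_le _ _
      omega
    have hS := sum_digits_le_aux q (by omega) m i hi'
    exact key_aux r _ _ hr hrM hmod hS
  constructor
  · rintro ⟨h1, h0⟩
    subst h1
    apply Finset.filter_congr
    intro i hi
    simp only [Nat.mul_zero, Nat.zero_add] at hℓ
    constructor
    · rintro ⟨_, h⟩; exact h
    · intro h
      refine ⟨?_, h⟩
      have := main i hi h
      omega
  · intro hneg
    apply Finset.filter_congr
    intro i hi
    by_cases hc : ℓ₀ = r - 1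
    · simp only [if_pos hc]
      have : r * ℓ₁ + r - 1 = ℓ := by omega
      rw [this]
    · have hℓ₁ : ℓ₁ ≠ 0 := by
        intro h; exact hneg ⟨h, by omega⟩
      obtain ⟨k, rfl⟩ : ∃ k, ℓ₁ = k + 1 := ⟨ℓ₁ - 1, by omega⟩
      have hrk : r * (k + 1) = r * k + r := by ring
      simp only [if_neg hc, Nat.add_sub_cancel]
      have hrl : r * k + r + 1 ≤ (q - 1) * m := by omega
      constructor
      · rintro ⟨h, hmod⟩
        refine ⟨by omega, hmod⟩
      · rintro ⟨h, hmod⟩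
        refine ⟨?_, hmod⟩
        have hdvd : r ∣ (q - 1) * m - (r * k + r) :=
          Nat.dvd_sub hrM ⟨k + 1, by ring⟩
        have hle : (Nat.digits q i).sum ≤ (q - 1) * m - (r * k + r) := by omega
        have := key_aux r _ _ hr hdvd hmod hle
        omega
end
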